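/- Let 0 ≤ h < d ≤ 1 and (V, W) ~ Geom*(h, 1-d). Then the second moment of Ĥ = V/(1+V+W) equals (d-h)(h+d-1)h/(1+h-d)³ · Li₂(1+h-d) + (d-h)(2h+d-1)h/(1+h-d)³ · log(d-h) + h²/(1+h-d)², where Li₂(x) = ∑_{n≥1} x^n/n² is the dilogarithm. -/

import Mathlib

open MeasureTheory

/-- The real dilogarithm `Li₂(x) = ∑_{n ≥ 1} xⁿ/n²`. -/
noncomputable def Li2 (x : ℝ) : ℝ := ∑' n : ℕ, x ^ (n + 1) / ((n : ℝ) + 1) ^ 2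

open Finset


lemma sum_choose_mul' (x y : ℝ) (n : ℕ) :
    ∑ k ∈ range (n + 1), ((n.choose k : ℝ) * x ^ k * y ^ (n - k)) = (x + y) ^ n := by
  rw [add_pow]
  exact Finset.sum_congr rfl fun k _ => by ring

lemma sum_k_choose_mul (x y : ℝ) (n : ℕ) :
    ∑ k ∈ range (n + 1), ((k : ℝ) * (n.choose k : ℝ) * x ^ k * y ^ (n - k))
      = (n : ℝ) * x * (x + y) ^ (n - 1) := by
  cases n with
  | zero => simp
  | succ m =>
    rw [Finset.sum_range_succ']
    have hkey : ∀ i : ℕ, ((i : ℝ) + 1) * ((m + 1).choose (i + 1) : ℝ)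
        = ((m : ℝ) + 1) * (m.choose i : ℝ) := by
      intro i
      have h2 := congrArg (Nat.cast : ℕ → ℝ) (Nat.add_one_mul_choose_eq m i)
      push_cast at h2
      linarith
    have hc : ∀ i ∈ range (m + 1),
        ((i + 1 : ℕ) : ℝ) * ((m + 1).choose (i + 1) : ℝ) * x ^ (i + 1) * y ^ (m + 1 - (i + 1))
        = ((m : ℝ) + 1) * x * ((m.choose i : ℝ) * x ^ i * y ^ (m - i)) := by
      intro i _
      rw [Nat.succ_sub_succ]
      push_cast
      linear_combination (x ^ (i + 1) * y ^ (m - i)) * hkey i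
    rw [Finset.sum_congr rfl hc, ← Finset.mul_sum, sum_choose_mul']
    push_cast
    simp

lemma sum_kk_choose_mul (x y : ℝ) (n : ℕ) :
    ∑ k ∈ range (n + 1), ((k : ℝ) * ((k : ℝ) - 1) * (n.choose k : ℝ) * x ^ k * y ^ (n - k))
      = (n : ℝ) * ((n : ℝ) - 1) * x ^ 2 * (x + y) ^ (n - 2) := by
  match n with
  | 0 => simp
  | 1 => norm_num [Finset.sum_range_succ]
  | (m + 2) =>
    rw [Finset.sum_range_succ', Finset.sum_range_succ']
    have hkey : ∀ j : ℕ, ((j : ℝ) + 2) * ((j : ℝ) + 1) * ((m + 2).choose (j + 2) : ℝ)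
        = ((m : ℝ) + 2) * ((m : ℝ) + 1) * (m.choose j : ℝ) := by
      intro j
      have h1 := congrArg (Nat.cast : ℕ → ℝ) (Nat.add_one_mul_choose_eq (m + 1) (j + 1))
      have h2 := congrArg (Nat.cast : ℕ → ℝ) (Nat.add_one_mul_choose_eq m j)
      push_cast at h1 h2
      nlinarith [h1, h2]
    have hc : ∀ j ∈ range (m + 1),
        ((j + 1 + 1 : ℕ) : ℝ) * (((j + 1 + 1 : ℕ) : ℝ) - 1) * ((m + 2).choose (j + 1 + 1) : ℝ)
            * x ^ (j + 1 + 1) * y ^ (m + 2 - (j + 1 + 1))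
        = ((m : ℝ) + 2) * ((m : ℝ) + 1) * x ^ 2 * ((m.choose j : ℝ) * x ^ j * y ^ (m - j)) := by
      intro j _
      have hsub : m + 2 - (j + 1 + 1) = m - j := by omega
      rw [hsub]
      push_cast
      linear_combination (x ^ (j + 1 + 1) * y ^ (m - j)) * hkey j
    rw [Finset.sum_congr rfl hc, ← Finset.mul_sum, sum_choose_mul']
    push_cast
    ring_nf

lemma fiber_sum_one (x y c : ℝ) (n : ℕ) :
    ∑ p ∈ Finset.HasAntidiagonal.antidiagonal n, (x ^ p.1 * y ^ p.2 * c * ((p.1 + p.2).choose p.1 : ℝ))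
      = c * (x + y) ^ n := by
  rw [Finset.Nat.sum_antidiagonal_eq_sum_range_succ_mk]
  have hc : ∀ k ∈ range (n + 1),
      x ^ k * y ^ (n - k) * c * (((k + (n - k)).choose k : ℝ))
      = c * ((n.choose k : ℝ) * x ^ k * y ^ (n - k)) := by
    intro k hk
    rw [Nat.add_sub_cancel' (Nat.lt_succ_iff.1 (Finset.mem_range.1 hk))]
    ring
  rw [Finset.sum_congr rfl hc, ← Finset.mul_sum, sum_choose_mul']

lemma fiber_sum_f (x y c : ℝ) (n : ℕ) :
    ∑ p ∈ Finset.HasAntidiagonal.antidiagonal n,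
        (((p.1 : ℝ) / (1 + p.1 + p.2)) ^ 2 * (x ^ p.1 * y ^ p.2 * c * ((p.1 + p.2).choose p.1 : ℝ)))
      = c / ((n : ℝ) + 1) ^ 2 * ((n : ℝ) * ((n : ℝ) - 1) * x ^ 2 * (x + y) ^ (n - 2)
          + (n : ℝ) * x * (x + y) ^ (n - 1)) := by
  rw [Finset.Nat.sum_antidiagonal_eq_sum_range_succ_mk]
  have hc : ∀ k ∈ range (n + 1),
      ((k : ℝ) / (1 + (k : ℝ) + ((n - k : ℕ) : ℝ))) ^ 2
          * (x ^ k * y ^ (n - k) * c * (((k + (n - k)).choose k : ℝ)))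
      = c / ((n : ℝ) + 1) ^ 2 * ((k : ℝ) * ((k : ℝ) - 1) * (n.choose k : ℝ) * x ^ k * y ^ (n - k)
          + (k : ℝ) * (n.choose k : ℝ) * x ^ k * y ^ (n - k)) := by
    intro k hk
    have hkn : k ≤ n := Nat.lt_succ_iff.1 (Finset.mem_range.1 hk)
    rw [Nat.add_sub_cancel' hkn, Nat.cast_sub hkn]
    have hne : 1 + (k : ℝ) + ((n : ℝ) - (k : ℝ)) = (n : ℝ) + 1 := by ring
    rw [hne]
    have h1 : ((n : ℝ) + 1) ≠ 0 := by positivity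
    field_simp
    ring
  rw [Finset.sum_congr rfl hc, ← Finset.mul_sum, Finset.sum_add_distrib,
    sum_kk_choose_mul, sum_k_choose_mul]

lemma hasSum_of_antidiagonal {F : ℕ × ℕ → ℝ} (h0 : ∀ p, 0 ≤ F p) {G : ℕ → ℝ}
    (hFG : ∀ n, ∑ p ∈ Finset.HasAntidiagonal.antidiagonal n, F p = G n) {S : ℝ} (hG : HasSum G S) :
    HasSum F S := by
  have hfib : ∀ n : ℕ, ∑' (c : (Finset.HasAntidiagonal.antidiagonal n : Finset (ℕ × ℕ))), F c = G n := by
    intro n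
    rw [Finset.tsum_subtype]
    exact hFG n
  have hs : Summable (fun x : (Σ n : ℕ, (Finset.HasAntidiagonal.antidiagonal n : Finset (ℕ × ℕ))) => F x.2) := by
    rw [summable_sigma_of_nonneg (fun x => h0 _)]
    refine ⟨fun n => (hasSum_fintype _).summable, ?_⟩
    exact Summable.congr hG.summable fun n => (hfib n).symm
  have hsF : Summable F := Finset.HasAntidiagonal.sigmaAntidiagonalEquivProd.summable_iff.1 hs
  have : (∑' p, F p) = S := by
    rw [← Finset.HasAntidiagonal.sigmaAntidiagonalEquivProd.tsum_eq F]
    have : (fun x : (Σ n : ℕ, (Finset.HasAntidiagonal.antidiagonal n : Finset (ℕ × ℕ))) =>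
        F (Finset.HasAntidiagonal.sigmaAntidiagonalEquivProd x)) = fun x => F x.2 := rfl
    rw [this, Summable.tsum_sigma hs]
    rw [tsum_congr hfib, hG.tsum_eq]
  exact this ▸ hsF.hasSum

lemma integral_discrete {Ω : Type*} [MeasurableSpace Ω] (μ : Measure Ω)
    [IsProbabilityMeasure μ] (V W : Ω → ℕ) (pm : ℕ × ℕ → ℝ)
    (hpm0 : ∀ p, 0 ≤ pm p)
    (hpmf : ∀ p : ℕ × ℕ, μ {ω | V ω = p.1 ∧ W ω = p.2} = ENNReal.ofReal (pm p))
    (hpm1 : HasSum pm 1) (f : ℕ × ℕ → ℝ) (hf0 : ∀ p, 0 ≤ f p)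
    {L : ℝ} (hL : HasSum (fun p => f p * pm p) L) :
    ∫ ω, f (V ω, W ω) ∂μ = L := by
  classical
  set e : ℕ ≃ ℕ × ℕ := (Denumerable.eqv (ℕ × ℕ)).symm with he
  set A : ℕ × ℕ → Set Ω := fun p => {ω | V ω = p.1 ∧ W ω = p.2} with hA
  set B : ℕ → Set Ω := fun n => toMeasurable μ (A (e n)) with hB
  set D : ℕ → Set Ω := disjointed B with hD
  have hBm : ∀ n, MeasurableSet (B n) := fun n => measurableSet_toMeasurable _ _
  have hDm : ∀ n, MeasurableSet (D n) := MeasurableSet.disjointed hBm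
  have hDdisj : Pairwise (Function.onFun Disjoint D) := disjoint_disjointed B
  have hDsub : ∀ n, D n ⊆ B n := disjointed_subset B
  have hcoverA : ∀ ω, ω ∈ A (V ω, W ω) := fun ω => ⟨rfl, rfl⟩
  have hUD : (⋃ n, D n) = Set.univ := by
    rw [hD, iUnion_disjointed]
    apply Set.eq_univ_of_forall
    intro ω
    refine Set.mem_iUnion.2 ⟨e.symm (V ω, W ω), ?_⟩
    apply subset_toMeasurable μ (A (e (e.symm (V ω, W ω))))
    rw [Equiv.apply_symm_apply]
    exact hcoverA ω
  have hμB : ∀ n, μ (B n) = ENNReal.ofReal (pm (e n)) := by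
    intro n
    rw [hB]
    simp only
    rw [measure_toMeasurable]
    exact hpmf (e n)
  have h2 : ∑' n, μ (B n) = 1 := by
    simp_rw [hμB]
    rw [e.tsum_eq (fun p => ENNReal.ofReal (pm p)),
      ← ENNReal.ofReal_tsum_of_nonneg hpm0 hpm1.summable, hpm1.tsum_eq, ENNReal.ofReal_one]
  have h1 : ∑' n, μ (D n) = 1 := by
    rw [← measure_iUnion hDdisj hDm, hUD, measure_univ]
  have hμD : ∀ n, μ (D n) = μ (B n) := by
    by_contra hc
    push_neg at hc
    obtain ⟨n, hn⟩ := hc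
    have hlt : μ (D n) < μ (B n) := lt_of_le_of_ne (measure_mono (hDsub n)) hn
    have := ENNReal.tsum_lt_tsum (f := fun n => μ (D n))
      (h1 ▸ ENNReal.one_ne_top) (fun m => measure_mono (hDsub m)) hlt
    rw [h1, h2] at this
    exact lt_irrefl _ this
  have hex : ∀ ω, ∃ n, ω ∈ D n := by
    intro ω
    have : ω ∈ ⋃ n, D n := by rw [hUD]; trivial
    exact Set.mem_iUnion.1 this
  set N : Ω → ℕ := fun ω => Nat.find (hex ω) with hN
  have hND : ∀ ω, ω ∈ D (N ω) := fun ω => Nat.find_spec (hex ω)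
  have hNeq : ∀ ω n, ω ∈ D n → N ω = n := by
    intro ω n hωn
    by_contra hne
    exact Set.disjoint_left.1 (hDdisj hne) (hND ω) hωn
  have hNm : Measurable N := by
    apply measurable_to_countable'
    intro n
    have hpre : N ⁻¹' {n} = D n := by
      ext ω
      simp only [Set.mem_preimage, Set.mem_singleton_iff]
      exact ⟨fun hh => hh ▸ hND ω, hNeq ω n⟩
    rw [hpre]
    exact hDm n
  have hnull : μ (⋃ n, (A (e n) \ D n)) = 0 := by
    refine measure_iUnion_null fun n => ?_
    have hsub : A (e n) \ D n ⊆ B n \ D n :=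
      Set.diff_subset_diff_left (subset_toMeasurable μ (A (e n)))
    refine measure_mono_null hsub ?_
    rw [measure_diff (hDsub n) (hDm n).nullMeasurableSet (measure_ne_top _ _), hμD, tsub_self]
  have hae : (fun ω => f (V ω, W ω)) =ᵐ[μ] fun ω => f (e (N ω)) := by
    rw [Filter.EventuallyEq, ae_iff]
    refine measure_mono_null ?_ hnull
    intro ω hω
    simp only [Set.mem_setOf_eq] at hω
    refine Set.mem_iUnion.2 ⟨e.symm (V ω, W ω), ?_, ?_⟩
    · rw [Equiv.apply_symm_apply]
      exact hcoverA ω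
    · intro hmem
      apply hω
      rw [hNeq ω _ hmem, Equiv.apply_symm_apply]
  rw [integral_congr_ae hae]
  have hgmeas : Measurable fun ω => f (e (N ω)) := (measurable_from_nat (f := fun n => f (e n))).comp hNm
  rw [integral_eq_lintegral_of_nonneg_ae (Filter.Eventually.of_forall fun ω => hf0 _)
    hgmeas.aestronglyMeasurable]
  have hpt : ∀ ω, ENNReal.ofReal (f (e (N ω)))
      = ∑' n, Set.indicator (D n) (fun _ => ENNReal.ofReal (f (e n))) ω := by
    intro ω
    rw [tsum_eq_single (N ω) ?_]
    · rw [Set.indicator_of_mem (hND ω)]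
    · intro m hm
      apply Set.indicator_of_notMem
      intro hmem
      exact hm (hNeq ω m hmem).symm
  rw [lintegral_congr hpt,
    lintegral_tsum fun n => (measurable_const.indicator (hDm n)).aemeasurable]
  have hterm : ∀ n, ∫⁻ ω, Set.indicator (D n) (fun _ => ENNReal.ofReal (f (e n))) ω ∂μ
      = ENNReal.ofReal (f (e n) * pm (e n)) := by
    intro n
    rw [lintegral_indicator_const (hDm n), hμD, hμB, ← ENNReal.ofReal_mul (hf0 _)]
  rw [tsum_congr hterm, e.tsum_eq (fun p => ENNReal.ofReal (f p * pm p)),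
    ← ENNReal.ofReal_tsum_of_nonneg (fun p => mul_nonneg (hf0 p) (hpm0 p)) hL.summable,
    hL.tsum_eq]
  exact ENNReal.toReal_ofReal
    (hasSum_le (fun p => mul_nonneg (hf0 p) (hpm0 p)) hasSum_zero hL)

/-- Second moment of the NPMLE `V/(1+V+W)` where `(V,W) ~ Geom*(h, 1-d)`. -/
theorem npmle_second_moment {Ω : Type*} [MeasurableSpace Ω] (μ : Measure Ω)
    [IsProbabilityMeasure μ] (h d : ℝ) (hh : 0 ≤ h) (hhd : h < d) (hd : d ≤ 1)
    (V W : Ω → ℕ)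
    (hpmf : ∀ a b : ℕ,
      μ {ω | V ω = a ∧ W ω = b} =
        ENNReal.ofReal (h ^ a * (1 - d) ^ b * (d - h) * ((a + b).choose a : ℝ))) :
    ∫ ω, (((V ω : ℝ)) / (1 + V ω + W ω)) ^ 2 ∂μ =
      (d - h) * (h + d - 1) * h / (1 + h - d) ^ 3 * Li2 (1 + h - d) +
        (d - h) * (2 * h + d - 1) * h / (1 + h - d) ^ 3 * Real.log (d - h) +
        h ^ 2 / (1 + h - d) ^ 2 := by
  classical
  have hdh : 0 < d - h := sub_pos.2 hhd
  have hq0 : 0 ≤ 1 + h - d := by linarith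
  have hq1 : 1 + h - d < 1 := by linarith
  have hd1 : 0 ≤ 1 - d := by linarith
  have hadd : h + (1 - d) = 1 + h - d := by ring
  have hpm0 : ∀ p : ℕ × ℕ,
      0 ≤ h ^ p.1 * (1 - d) ^ p.2 * (d - h) * ((p.1 + p.2).choose p.1 : ℝ) := fun p =>
    mul_nonneg (mul_nonneg (mul_nonneg (pow_nonneg hh _) (pow_nonneg hd1 _)) hdh.le)
      (Nat.cast_nonneg _)
  have hf0 : ∀ p : ℕ × ℕ, 0 ≤ ((p.1 : ℝ) / (1 + p.1 + p.2)) ^ 2 := fun p => sq_nonneg _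
  have hpm1 : HasSum
      (fun p : ℕ × ℕ => h ^ p.1 * (1 - d) ^ p.2 * (d - h) * ((p.1 + p.2).choose p.1 : ℝ)) 1 := by
    refine hasSum_of_antidiagonal hpm0 (G := fun n => (d - h) * (1 + h - d) ^ n)
      (fun n => ?_) ?_
    · rw [fiber_sum_one h (1 - d) (d - h) n, hadd]
    · have hgs := (hasSum_geometric_of_lt_one hq0 hq1).mul_left (d - h)
      have hval : (d - h) * (1 - (1 + h - d))⁻¹ = 1 := by
        rw [show (1 : ℝ) - (1 + h - d) = d - h by ring]
        field_simp
      rwa [hval] at hgs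
  rcases eq_or_lt_of_le hh with h0 | hpos
  · -- case h = 0
    subst h0
    have hz : (fun p : ℕ × ℕ => ((p.1 : ℝ) / (1 + p.1 + p.2)) ^ 2 *
        ((0 : ℝ) ^ p.1 * (1 - d) ^ p.2 * (d - 0) * ((p.1 + p.2).choose p.1 : ℝ)))
        = fun _ => (0 : ℝ) := by
      funext p
      rcases p with ⟨a, b⟩
      cases a with
      | zero => simp
      | succ k => simp [zero_pow]
    have hL : HasSum (fun p : ℕ × ℕ => ((p.1 : ℝ) / (1 + p.1 + p.2)) ^ 2 *
        ((0 : ℝ) ^ p.1 * (1 - d) ^ p.2 * (d - 0) * ((p.1 + p.2).choose p.1 : ℝ))) 0 := by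
      rw [hz]; exact hasSum_zero
    have hint := integral_discrete μ V W _ hpm0 (fun p => hpmf p.1 p.2) hpm1 _ hf0 hL
    rw [hint]
    norm_num
  · -- case 0 < h
    have hqpos : 0 < 1 + h - d := by linarith
    have hqne : (1 + h - d) ≠ 0 := ne_of_gt hqpos
    have hdhne : d - h ≠ 0 := ne_of_gt hdh
    have habs : |1 + h - d| < 1 := abs_lt.2 ⟨by linarith, hq1⟩
    have hLog : HasSum (fun n : ℕ => (1 + h - d) ^ (n + 1) / ((n : ℝ) + 1))
        (-Real.log (d - h)) := by
      have := Real.hasSum_pow_div_log_of_abs_lt_one habs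
      rwa [show (1 : ℝ) - (1 + h - d) = d - h by ring] at this
    have hGeomS : HasSum (fun n : ℕ => (1 + h - d) ^ (n + 1)) ((1 + h - d) / (d - h)) := by
      have hgs := (hasSum_geometric_of_lt_one hq0 hq1).mul_left (1 + h - d)
      have hfg : (fun n : ℕ => (1 + h - d) * (1 + h - d) ^ n)
          = fun n : ℕ => (1 + h - d) ^ (n + 1) := by
        funext n; rw [pow_succ]; ring
      rw [hfg, show (1 : ℝ) - (1 + h - d) = d - h by ring, ← div_eq_mul_inv] at hgs
      exact hgs
    have hLi2S : HasSum (fun n : ℕ => (1 + h - d) ^ (n + 1) / ((n : ℝ) + 1) ^ 2)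
        (Li2 (1 + h - d)) := by
      have hsumm : Summable (fun n : ℕ => (1 + h - d) ^ (n + 1) / ((n : ℝ) + 1) ^ 2) := by
        refine Summable.of_nonneg_of_le (fun n => by positivity) (fun n => ?_) hGeomS.summable
        refine div_le_self (by positivity) ?_
        nlinarith [Nat.cast_nonneg (α := ℝ) n]
      have := hsumm.hasSum
      rwa [Li2]
    have hv : HasSum (fun n : ℕ => (n : ℝ) * (1 + h - d) ^ (n + 1) / ((n : ℝ) + 1) ^ 2)
        (-Real.log (d - h) - Li2 (1 + h - d)) := by
      have hs := hLog.sub hLi2S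
      have hfg : (fun n : ℕ => (1 + h - d) ^ (n + 1) / ((n : ℝ) + 1)
            - (1 + h - d) ^ (n + 1) / ((n : ℝ) + 1) ^ 2)
          = fun n : ℕ => (n : ℝ) * (1 + h - d) ^ (n + 1) / ((n : ℝ) + 1) ^ 2 := by
        funext n
        have hne : ((n : ℝ) + 1) ≠ 0 := by positivity
        field_simp
        ring
      rwa [hfg] at hs
    have hw : HasSum (fun n : ℕ =>
          (n : ℝ) * ((n : ℝ) - 1) * (1 + h - d) ^ (n + 1) / ((n : ℝ) + 1) ^ 2)
        ((1 + h - d) / (d - h) - 3 * -Real.log (d - h) + 2 * Li2 (1 + h - d)) := by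
      have hs := (hGeomS.sub (hLog.mul_left 3)).add (hLi2S.mul_left 2)
      have hfg : (fun n : ℕ => ((1 + h - d) ^ (n + 1)
            - 3 * ((1 + h - d) ^ (n + 1) / ((n : ℝ) + 1)))
            + 2 * ((1 + h - d) ^ (n + 1) / ((n : ℝ) + 1) ^ 2))
          = fun n : ℕ =>
            (n : ℝ) * ((n : ℝ) - 1) * (1 + h - d) ^ (n + 1) / ((n : ℝ) + 1) ^ 2 := by
        funext n
        have hne : ((n : ℝ) + 1) ≠ 0 := by positivity
        field_simp
        ring
      rwa [hfg] at hs
    have hcomb := ((hw.div_const ((1 + h - d) ^ 3)).mul_left (h ^ 2)).add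
      ((hv.div_const ((1 + h - d) ^ 2)).mul_left h)
    have hcomb2 := hcomb.mul_left (d - h)
    have hfib : ∀ n : ℕ, ∑ p ∈ Finset.HasAntidiagonal.antidiagonal n,
        (((p.1 : ℝ) / (1 + p.1 + p.2)) ^ 2 *
          (h ^ p.1 * (1 - d) ^ p.2 * (d - h) * ((p.1 + p.2).choose p.1 : ℝ)))
        = (d - h) * (h ^ 2 *
            ((n : ℝ) * ((n : ℝ) - 1) * (1 + h - d) ^ (n + 1) / ((n : ℝ) + 1) ^ 2
              / (1 + h - d) ^ 3)
          + h * ((n : ℝ) * (1 + h - d) ^ (n + 1) / ((n : ℝ) + 1) ^ 2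
              / (1 + h - d) ^ 2)) := by
      intro n
      rw [fiber_sum_f h (1 - d) (d - h) n, hadd]
      have hne : ((n : ℝ) + 1) ≠ 0 := by positivity
      match n with
      | 0 => norm_num
      | 1 =>
        norm_num
        field_simp
      | (m + 2) =>
        have e1 : m + 2 - 1 = m + 1 := rfl
        have e2 : m + 2 - 2 = m := rfl
        rw [e1, e2]
        push_cast
        field_simp
        ring
    have hL : HasSum (fun p : ℕ × ℕ => ((p.1 : ℝ) / (1 + p.1 + p.2)) ^ 2 *
        (h ^ p.1 * (1 - d) ^ p.2 * (d - h) * ((p.1 + p.2).choose p.1 : ℝ)))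
        ((d - h) * (h ^ 2 *
            (((1 + h - d) / (d - h) - 3 * -Real.log (d - h) + 2 * Li2 (1 + h - d))
              / (1 + h - d) ^ 3)
          + h * ((-Real.log (d - h) - Li2 (1 + h - d)) / (1 + h - d) ^ 2))) := by
      exact hasSum_of_antidiagonal
        (fun p => mul_nonneg (hf0 p) (hpm0 p)) hfib hcomb2
    have hint := integral_discrete μ V W _ hpm0 (fun p => hpmf p.1 p.2) hpm1 _ hf0 hL
    rw [hint]
    field_simp
    ring
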